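/- Let R = ℂ[x_1,...,x_n]/(x_1x_2), R_1 = ℂ[x_1,...,x_n]/(x_1), R_2 = ℂ[x_1,...,x_n]/(x_2), B = R/(x_1,x_2). Then the sequence of R-modules Ω_R → Ω_{R_1} × Ω_{R_2} → Ω_B, where the first map sends d f̄(x_1,...,x_n) to (d f̄(0,x_2,...,x_n), d f̄(x_1,0,x_3,...,x_n)) and the second sends a pair of differentials to the difference of their restrictions to B, is exact in the middle. -/

import Mathlib

/-!
Every differential on a quotient of `A` lifts to `Ω[A⁄k]`, and by the conormal sequence the kernel
of `Ω[A⁄k] → Ω[(A ⧸ I)⁄k]` consists of the forms `d a + z` with `a ∈ I` and `z ∈ I • Ω[A⁄k]`.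
This kernel is additive in `I`: if `η₁, η₂` agree modulo `I₁ ⊔ I₂`, then `η₁ - η₂ = κ₁ + κ₂` with
`κᵢ` vanishing modulo `Iᵢ`, and `η₁ - κ₁ = η₂ + κ₂` restricts to `η₁` modulo `I₁` and to `η₂`
modulo `I₂`.
-/

namespace KaehlerDifferential

variable {k A : Type*} [CommRing k] [CommRing A] [Algebra k A]

theorem map_quotient_eq_zero_iff (I : Ideal A) (η : Ω[A⁄k]) :
    map k k A (A ⧸ I) η = 0 ↔ ∃ a ∈ I, η - D k A a ∈ I • (⊤ : Submodule A Ω[A⁄k]) := by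
  constructor
  · intro h
    have hη : mapBaseChange k A (A ⧸ I) (1 ⊗ₜ η) = 0 := by simp [h]
    obtain ⟨ξ, hξ⟩ := (exact_kerCotangentToTensor_mapBaseChange k A (A ⧸ I)
      Ideal.Quotient.mk_surjective _).1 hη
    obtain ⟨⟨a, ha⟩, rfl⟩ := Ideal.toCotangent_surjective _ ξ
    rw [kerCotangentToTensor_toCotangent] at hξ
    refine ⟨a, by rwa [Ideal.Quotient.algebraMap_eq, Ideal.mk_ker] at ha, ?_⟩
    rw [← Submodule.Quotient.mk_eq_zero, ← TensorProduct.quotTensorEquivQuotSMul_mk_one_tmul,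
      TensorProduct.tmul_sub, ← hξ, sub_self, map_zero]
  · rintro ⟨a, ha, hη⟩
    have hsmul : I • (⊤ : Submodule A Ω[A⁄k]) ≤ LinearMap.ker (map k k A (A ⧸ I)) :=
      Submodule.smul_le.2 fun r hr ω _ => by
        rw [LinearMap.mem_ker, map_smul, ← algebraMap_smul (A ⧸ I) r,
          Ideal.Quotient.algebraMap_eq, Ideal.Quotient.eq_zero_iff_mem.2 hr, zero_smul]
    rw [← sub_add_cancel η (D k A a), map_add, hsmul hη, map_D, Ideal.Quotient.algebraMap_eq,
      Ideal.Quotient.eq_zero_iff_mem.2 ha, Derivation.map_zero, add_zero]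

theorem exists_map_quotient_eq_of_map_quotient_sup_eq (I₁ I₂ : Ideal A) (η₁ η₂ : Ω[A⁄k])
    (h : map k k A (A ⧸ (I₁ ⊔ I₂)) η₁ = map k k A (A ⧸ (I₁ ⊔ I₂)) η₂) :
    ∃ η, map k k A (A ⧸ I₁) η = map k k A (A ⧸ I₁) η₁ ∧
      map k k A (A ⧸ I₂) η = map k k A (A ⧸ I₂) η₂ := by
  rw [← sub_eq_zero, ← map_sub, map_quotient_eq_zero_iff, Submodule.sup_smul] at h
  obtain ⟨a, ha, hη⟩ := h
  obtain ⟨a₁, ha₁, a₂, ha₂, rfl⟩ := Submodule.mem_sup.1 ha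
  obtain ⟨z₁, hz₁, z₂, hz₂, hz⟩ := Submodule.mem_sup.1 hη
  rw [map_add] at hz
  refine ⟨η₂ + (D k A a₂ + z₂), ?_, ?_⟩
  · rw [eq_comm, ← sub_eq_zero, ← map_sub, map_quotient_eq_zero_iff]
    exact ⟨a₁, ha₁, by convert hz₁ using 1; linear_combination (norm := abel) -hz⟩
  · rw [← sub_eq_zero, ← map_sub, map_quotient_eq_zero_iff]
    exact ⟨a₂, ha₂, by convert hz₂ using 1; abel⟩

theorem map_map {B C : Type*} [CommRing B] [CommRing C] [Algebra k B] [Algebra k C]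
    [Algebra A B] [Algebra A C] [Algebra B C] [IsScalarTower k A B] [IsScalarTower k A C]
    [IsScalarTower k B C] [IsScalarTower A B C] (η : Ω[A⁄k]) :
    map k k B C (map k k A B η) = map k k A C η := by
  suffices ((map k k B C).restrictScalars A).comp (map k k A B) = map k k A C from
    LinearMap.congr_fun this η
  ext a
  simp [IsScalarTower.algebraMap_apply A B C]

theorem exact_quotient_prod_quotient_sup {I I₁ I₂ J : Ideal A} (hJ : J = I₁ ⊔ I₂)
    [Algebra (A ⧸ I) (A ⧸ I₁)] [Algebra (A ⧸ I) (A ⧸ I₂)]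
    [Algebra (A ⧸ I₁) (A ⧸ J)] [Algebra (A ⧸ I₂) (A ⧸ J)]
    [IsScalarTower k (A ⧸ I) (A ⧸ I₁)] [IsScalarTower k (A ⧸ I) (A ⧸ I₂)]
    [IsScalarTower k (A ⧸ I₁) (A ⧸ J)] [IsScalarTower k (A ⧸ I₂) (A ⧸ J)]
    (h₁ : ∀ a, algebraMap (A ⧸ I) (A ⧸ I₁) (Ideal.Quotient.mk I a) = Ideal.Quotient.mk I₁ a)
    (h₂ : ∀ a, algebraMap (A ⧸ I) (A ⧸ I₂) (Ideal.Quotient.mk I a) = Ideal.Quotient.mk I₂ a)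
    (h₁J : ∀ a, algebraMap (A ⧸ I₁) (A ⧸ J) (Ideal.Quotient.mk I₁ a) = Ideal.Quotient.mk J a)
    (h₂J : ∀ a, algebraMap (A ⧸ I₂) (A ⧸ J) (Ideal.Quotient.mk I₂ a) = Ideal.Quotient.mk J a) :
    Function.Exact
      (fun ω : Ω[(A ⧸ I)⁄k] => (map k k (A ⧸ I) (A ⧸ I₁) ω, map k k (A ⧸ I) (A ⧸ I₂) ω))
      (fun p : Ω[(A ⧸ I₁)⁄k] × Ω[(A ⧸ I₂)⁄k] =>
        map k k (A ⧸ I₁) (A ⧸ J) p.1 - map k k (A ⧸ I₂) (A ⧸ J) p.2) := by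
  subst hJ
  have : IsScalarTower A (A ⧸ I) (A ⧸ I₁) := .of_algebraMap_eq fun a => (h₁ a).symm
  have : IsScalarTower A (A ⧸ I) (A ⧸ I₂) := .of_algebraMap_eq fun a => (h₂ a).symm
  have : IsScalarTower A (A ⧸ I₁) (A ⧸ (I₁ ⊔ I₂)) := .of_algebraMap_eq fun a => (h₁J a).symm
  have : IsScalarTower A (A ⧸ I₂) (A ⧸ (I₁ ⊔ I₂)) := .of_algebraMap_eq fun a => (h₂J a).symm
  have lift (S : Ideal A) := map_surjective_of_surjective k k A (A ⧸ S) Ideal.Quotient.mk_surjective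
  rintro ⟨ω₁, ω₂⟩
  obtain ⟨η₁, rfl⟩ := lift I₁ ω₁
  obtain ⟨η₂, rfl⟩ := lift I₂ ω₂
  constructor
  · intro h
    rw [sub_eq_zero, map_map, map_map] at h
    obtain ⟨η, hη₁, hη₂⟩ := exists_map_quotient_eq_of_map_quotient_sup_eq I₁ I₂ η₁ η₂ h
    exact ⟨map k k A (A ⧸ I) η, by simp only [map_map, hη₁, hη₂]⟩
  · rintro ⟨ω, hω⟩
    obtain ⟨η, rfl⟩ := lift I ω
    rw [← hω]
    simp only [map_map, sub_self]

end KaehlerDifferential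

open MvPolynomial

/-- **Exactness of the local differentials sequence at a normal crossing
double point.**  Let `R = ℂ[x_1,…,x_n]/(x_1x_2)`, `R_1 = ℂ[x_1,…,x_n]/(x_1)`,
`R_2 = ℂ[x_1,…,x_n]/(x_2)` and `B = R/(x_1,x_2) = ℂ[x_1,…,x_n]/(x_1,x_2)`.
The sequence of modules of Kähler differentials over `ℂ`
`Ω_R → Ω_{R_1} × Ω_{R_2} → Ω_B`,
where the first map sends `d f̄(x_1,…,x_n)` to
`(d f̄(0,x_2,…,x_n), d f̄(x_1,0,x_3,…,x_n))` (it is induced by the ring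
surjections `R → R_i` setting `x_1`, resp. `x_2`, to `0`) and the second map
sends a pair of differentials to the difference of their restrictions to `B`
(induced by the surjections `R_i → B`), is exact in the middle.  This is the
local computation underlying the exactness of
`0 → τ_X → Ω_X → π_*Ω_{X̃} → ν_*(Ω_{Z̃} ⊗ L)` for a normal crossing double
point. -/
theorem kaehler_sequence_exact (n : ℕ) (hn : 2 ≤ n) :
    letI P := MvPolynomial (Fin n) ℂ
    letI x1 : P := X ⟨0, by omega⟩
    letI x2 : P := X ⟨1, by omega⟩
    letI R := P ⧸ Ideal.span {x1 * x2}
    letI R1 := P ⧸ Ideal.span {x1}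
    letI R2 := P ⧸ Ideal.span {x2}
    letI B := P ⧸ Ideal.span ({x1, x2} : Set P)
    letI : Algebra R R1 := (Ideal.Quotient.factor
      (Ideal.span_singleton_le_span_singleton.2 (dvd_mul_right x1 x2))).toAlgebra
    letI : Algebra R R2 := (Ideal.Quotient.factor
      (Ideal.span_singleton_le_span_singleton.2 (dvd_mul_left x2 x1))).toAlgebra
    letI : Algebra R1 B := (Ideal.Quotient.factor (S := Ideal.span {x1})
      (T := Ideal.span ({x1, x2} : Set P))
      (Ideal.span_mono (Set.singleton_subset_iff.2 (Set.mem_insert _ _)))).toAlgebra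
    letI : Algebra R2 B := (Ideal.Quotient.factor (S := Ideal.span {x2})
      (T := Ideal.span ({x1, x2} : Set P))
      (Ideal.span_mono (Set.singleton_subset_iff.2
        (Set.mem_insert_of_mem _ rfl)))).toAlgebra
    letI := IsScalarTower.of_algebraMap_eq (R := ℂ) (S := R) (A := R1) fun _ => rfl
    letI := IsScalarTower.of_algebraMap_eq (R := ℂ) (S := R) (A := R2) fun _ => rfl
    letI := IsScalarTower.of_algebraMap_eq (R := ℂ) (S := R1) (A := B) fun _ => rfl
    letI := IsScalarTower.of_algebraMap_eq (R := ℂ) (S := R2) (A := B) fun _ => rfl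
    letI := IsScalarTower.to_smulCommClass (R := ℂ) (A := R) (M := R1)
    letI := IsScalarTower.to_smulCommClass (R := ℂ) (A := R) (M := R2)
    letI := IsScalarTower.to_smulCommClass (R := ℂ) (A := R1) (M := B)
    letI := IsScalarTower.to_smulCommClass (R := ℂ) (A := R2) (M := B)
    Function.Exact
      (fun ω : Ω[R⁄ℂ] =>
        ((KaehlerDifferential.map ℂ ℂ R R1 ω, KaehlerDifferential.map ℂ ℂ R R2 ω) :
          Ω[R1⁄ℂ] × Ω[R2⁄ℂ]))
      (fun p : Ω[R1⁄ℂ] × Ω[R2⁄ℂ] =>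
        KaehlerDifferential.map ℂ ℂ R1 B p.1 - KaehlerDifferential.map ℂ ℂ R2 B p.2) := by
  -- The algebra structures between the quotients exist only inside the statement, so they are
  -- found by unification rather than by instance search.
  apply (config := { synthAssignedInstances := false })
    KaehlerDifferential.exact_quotient_prod_quotient_sup
  · exact Ideal.span_insert _ _
  all_goals exact fun _ => rfl
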